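/- arXiv:2106.10784 — 2 statements merged into one kernel-verified Lean document; each statement's English description precedes it below -/
import Mathlib

section
/- Let H be a symmetric matrix with μI ⪯ H ⪯ (1/γ)I (μ, γ > 0, γμ ≤ 1), let v be a vector with ‖v‖ ≤ C₂, and let B be a matrix with ‖B‖ ≤ C₁. Define the exact quantity g = vᵀ H⁻¹ B and the truncated approximation g_K = γ vᵀ (∑_{k=0}^{K} (I - γH)^k) B. Then ‖g - g_K‖ ≤ C₁ C₂ (1/μ)(1 - γμ)^{K+1}. -/
open scoped RealInnerProductSpace

/-!
With `T = 1 - γ H`, the bounds `μ ≤ H ≤ 1/γ` give `0 ≤ T ≤ 1 - γμ` as quadratic forms, so the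
symmetric operator `T` has norm at most `1 - γμ`. The geometric sum telescopes,
`γ H ∑_{k ≤ K} T^k = 1 - T^{K+1}`, hence `H⁻¹ - γ ∑_{k ≤ K} T^k = H⁻¹ T^{K+1}`, and coercivity
of `H` gives `‖H⁻¹‖ ≤ 1/μ`. The error is `vᵀ H⁻¹ T^{K+1} B`, of norm at most
`C₂ (1/μ) (1 - γμ)^{K+1} C₁`.
-/

open Finset

theorem sub_smul_geom_sum_eq_mul_pow {𝕜 R : Type*} [CommRing 𝕜] [Ring R] [Algebra 𝕜 R]
    {a b : R} (hba : b * a = 1) (c : 𝕜) (N : ℕ) :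
    b - c • ∑ k ∈ range N, (1 - c • a) ^ k = b * (1 - c • a) ^ N := by
  have hgeom : c • a * ∑ k ∈ range N, (1 - c • a) ^ k = 1 - (1 - c • a) ^ N := by
    simpa only [sub_sub_cancel] using mul_neg_geom_sum (1 - c • a) N
  calc b - c • ∑ k ∈ range N, (1 - c • a) ^ k
      = b - b * (c • a * ∑ k ∈ range N, (1 - c • a) ^ k) := by
        rw [smul_mul_assoc, mul_smul_comm, ← mul_assoc, hba, one_mul]
    _ = b * (1 - c • a) ^ N := by rw [hgeom, mul_sub, mul_one, sub_sub_cancel]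

namespace ContinuousLinearMap

theorem norm_le_of_isSymmetric_of_abs_re_inner_le {𝕜 E : Type*} [RCLike 𝕜]
    [NormedAddCommGroup E] [InnerProductSpace 𝕜 E] {T : E →L[𝕜] E}
    (hT : (T : E →ₗ[𝕜] E).IsSymmetric) {c : ℝ} (hc : 0 ≤ c)
    (h : ∀ x, |RCLike.re (inner 𝕜 (T x) x)| ≤ c * ‖x‖ ^ 2) : ‖T‖ ≤ c := by
  rw [T.norm_eq_iSup_rayleighQuotient hT]
  refine ciSup_le fun x => ?_
  rcases eq_or_ne x 0 with rfl | hx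
  · simpa using hc
  · rw [rayleighQuotient, reApplyInnerSelf_apply, abs_div, abs_sq,
      div_le_iff₀ (by positivity)]
    exact h x

variable {E : Type*} [NormedAddCommGroup E] [InnerProductSpace ℝ E]

theorem inner_one_sub_smul_apply_self (H : E →L[ℝ] E) (γ : ℝ) (x : E) :
    ⟪(1 - γ • H) x, x⟫ = ‖x‖ ^ 2 - γ * ⟪H x, x⟫ := by
  simp only [sub_apply, one_apply_eq_self, smul_apply, inner_sub_left, real_inner_smul_left,
    real_inner_self_eq_norm_sq]

theorem norm_one_sub_smul_le [CompleteSpace E] {H : E →L[ℝ] E} (hH : IsSelfAdjoint H)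
    {μ L γ : ℝ} (hγ : 0 ≤ γ) (hγμ : γ * μ ≤ 1) (hγL : γ * L ≤ 1)
    (hlow : ∀ x, μ * ‖x‖ ^ 2 ≤ ⟪H x, x⟫) (hup : ∀ x, ⟪H x, x⟫ ≤ L * ‖x‖ ^ 2) :
    ‖1 - γ • H‖ ≤ 1 - γ * μ := by
  have hsymm : IsSelfAdjoint (1 - γ • H) :=
    (IsSelfAdjoint.one _).sub ((IsSelfAdjoint.all γ).smul hH)
  refine norm_le_of_isSymmetric_of_abs_re_inner_le hsymm.isSymmetric (by linarith) fun x => ?_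
  rw [RCLike.re_to_real, inner_one_sub_smul_apply_self, abs_le]
  have hsq := sq_nonneg ‖x‖
  constructor
  · nlinarith [mul_le_mul_of_nonneg_left (hup x) hγ]
  · nlinarith [mul_le_mul_of_nonneg_left (hlow x) hγ]

theorem mul_norm_le_norm_apply_of_coercive {H : E →L[ℝ] E} {μ : ℝ}
    (hlow : ∀ x, μ * ‖x‖ ^ 2 ≤ ⟪H x, x⟫) (x : E) : μ * ‖x‖ ≤ ‖H x‖ := by
  rcases eq_or_ne x 0 with rfl | hne
  · simp
  · have hx : 0 < ‖x‖ := norm_pos_iff.mpr hne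
    have h : μ * ‖x‖ * ‖x‖ ≤ ‖H x‖ * ‖x‖ := by
      linarith [hlow x, real_inner_le_norm (H x) x]
    exact le_of_mul_le_mul_right h hx

theorem norm_le_inv_of_coercive_of_comp_eq_one {H G : E →L[ℝ] E} {μ : ℝ} (hμ : 0 < μ)
    (hlow : ∀ x, μ * ‖x‖ ^ 2 ≤ ⟪H x, x⟫) (hHG : H.comp G = 1) : ‖G‖ ≤ μ⁻¹ := by
  refine opNorm_le_bound _ (inv_nonneg.mpr hμ.le) fun x => ?_
  have h := mul_norm_le_norm_apply_of_coercive hlow (G x)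
  rw [← comp_apply, hHG, one_apply_eq_self] at h
  rw [inv_mul_eq_div, le_div_iff₀ hμ]
  linarith

end ContinuousLinearMap

/-- Theorem 1 error bound: let `H` be symmetric with `μ I ⪯ H ⪯ (1/γ) I`
(`μ, γ > 0`, `γ μ ≤ 1`), `v` a vector with `‖v‖ ≤ C₂`, and `B` an operator with
`‖B‖ ≤ C₁`.  With `g = vᵀ H⁻¹ B` the exact quantity and
`g_K = γ vᵀ (∑_{k=0}^K (I - γH)^k) B` the truncated approximation,
`‖g - g_K‖ ≤ C₁ C₂ (1/μ)(1 - γμ)^{K+1}`. -/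
theorem hypergradient_truncation_error
    {n m : ℕ}
    (H : EuclideanSpace ℝ (Fin n) →L[ℝ] EuclideanSpace ℝ (Fin n))
    (hsym : IsSelfAdjoint H)
    (μ γ C₁ C₂ : ℝ) (hμ : 0 < μ) (hγ : 0 < γ) (hγμ : γ * μ ≤ 1)
    (hlow : ∀ x, μ * ‖x‖ ^ 2 ≤ ⟪H x, x⟫)
    (hup : ∀ x, ⟪H x, x⟫ ≤ (1 / γ) * ‖x‖ ^ 2)
    (v : EuclideanSpace ℝ (Fin n)) (hv : ‖v‖ ≤ C₂)
    (B : EuclideanSpace ℝ (Fin m) →L[ℝ] EuclideanSpace ℝ (Fin n)) (hB : ‖B‖ ≤ C₁)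
    (Hinv : EuclideanSpace ℝ (Fin n) →L[ℝ] EuclideanSpace ℝ (Fin n))
    (hHinv : H.comp Hinv = 1 ∧ Hinv.comp H = 1)
    (K : ℕ) :
    ‖(InnerProductSpace.toDual ℝ _ v).toContinuousLinearMap.comp (Hinv.comp B) -
        (InnerProductSpace.toDual ℝ _ v).toContinuousLinearMap.comp
          ((γ • ∑ k ∈ Finset.range (K + 1),
              ((1 : EuclideanSpace ℝ (Fin n) →L[ℝ] EuclideanSpace ℝ (Fin n)) - γ • H) ^ k).comp B)‖
      ≤ C₁ * C₂ * (1 / μ) * (1 - γ * μ) ^ (K + 1) := by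
  obtain ⟨hHHinv, hHinvH⟩ := hHinv
  set f := (InnerProductSpace.toDual ℝ _ v).toContinuousLinearMap
  set T := (1 : EuclideanSpace ℝ (Fin n) →L[ℝ] EuclideanSpace ℝ (Fin n)) - γ • H
  have hf : ‖f‖ = ‖v‖ := (InnerProductSpace.toDual ℝ _).norm_map v
  have hT : ‖T‖ ≤ 1 - γ * μ :=
    ContinuousLinearMap.norm_one_sub_smul_le hsym hγ.le hγμ (by rw [mul_one_div_cancel hγ.ne'])
      hlow hup
  have hHinvnorm : ‖Hinv‖ ≤ μ⁻¹ :=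
    ContinuousLinearMap.norm_le_inv_of_coercive_of_comp_eq_one hμ hlow hHHinv
  have herror : Hinv - γ • ∑ k ∈ range (K + 1), T ^ k = Hinv * T ^ (K + 1) :=
    sub_smul_geom_sum_eq_mul_pow hHinvH γ (K + 1)
  calc ‖f.comp (Hinv.comp B) - f.comp ((γ • ∑ k ∈ range (K + 1), T ^ k).comp B)‖
      = ‖f.comp ((Hinv * T ^ (K + 1)).comp B)‖ := by
        rw [← ContinuousLinearMap.comp_sub, ← ContinuousLinearMap.sub_comp, herror]
    _ ≤ ‖f‖ * (‖Hinv‖ * ‖T‖ ^ (K + 1) * ‖B‖) := by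
        grw [ContinuousLinearMap.opNorm_comp_le, ContinuousLinearMap.opNorm_comp_le, norm_mul_le,
          norm_pow_le' T K.succ_pos]
    _ ≤ C₂ * (μ⁻¹ * (1 - γ * μ) ^ (K + 1) * C₁) := by
        rw [hf]
        gcongr
        exact (norm_nonneg v).trans hv
    _ = C₁ * C₂ * (1 / μ) * (1 - γ * μ) ^ (K + 1) := by ring
end

section
/- Fixed-point unrolling: suppose the recurrence Z_t = A Z_{t-1} + B uses constant matrices A, B for the last K steps. Then the contribution of the last K steps equals ∑_{k=0}^{K-1} A^k B. In particular, if A = I - γH and B = -γC for a gradient-descent step at a stationary point of a C² function L₁ (H = ∇²_{ww}L₁, C = ∇²_{wα}L₁ at w*), the K-step truncated backpropagation hypergradient equals the K-term Neumann-approximation hypergradient: ∂L₂/∂α - γ (∂L₂/∂w)ᵀ ∑_{k=0}^{K-1} (I - γH)^k C. -/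
namespace Matrix

variable {ι κ R : Type*} [Fintype ι] [DecidableEq ι] [Semiring R]

theorem eq_pow_mul_add_geom_sum_mul_of_affine_recurrence {K : ℕ} (A : Matrix ι ι R)
    (B : Matrix ι κ R) (Z : ℕ → Matrix ι κ R) (hrec : ∀ t < K, Z (t + 1) = A * Z t + B) :
    ∀ t ≤ K, Z t = A ^ t * Z 0 + (∑ k ∈ Finset.range t, A ^ k) * B := by
  intro t ht
  induction t with
  | zero => simp
  | succ t ih =>
    rw [hrec t ht, ih (Nat.le_of_succ_le ht), geom_sum_succ, pow_succ']
    simp only [Matrix.mul_add, Matrix.add_mul, Matrix.mul_assoc, Matrix.one_mul, add_assoc]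

end Matrix

/-- Corollary 2 (fixed-point unrolling): if the recurrence `Z_t = A Z_{t-1} + B`
uses constant matrices `A, B` for the last `K` steps, the contribution of those
steps is `(∑_{k=0}^{K-1} A^k) B`, i.e. `Z_K = A^K Z_0 + (∑_{k<K} A^k) B`.
In particular, for a gradient-descent step at a stationary point of `L₁`
(`A = I - γH` with `H = ∇²_{ww}L₁`, `B = -γC` with `C = ∇²_{wα}L₁`), the
`K`-step truncated backpropagation hypergradient equals the `K`-term
Neumann-approximation hypergradient
`∂L₂/∂α - γ (∂L₂/∂w)ᵀ ∑_{k=0}^{K-1} (I - γH)^k C`. -/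
theorem fixed_point_unrolling_eq_neumann
    {n m K : ℕ} (γ : ℝ)
    (A H : Matrix (Fin n) (Fin n) ℝ)
    (B C : Matrix (Fin n) (Fin m) ℝ)
    (Z : ℕ → Matrix (Fin n) (Fin m) ℝ)
    (g2α : Matrix (Fin 1) (Fin m) ℝ)
    (g2w : Matrix (Fin 1) (Fin n) ℝ)
    (hA : A = 1 - γ • H) (hB : B = -(γ • C))
    (hrec : ∀ t, 1 ≤ t → t ≤ K → Z t = A * Z (t - 1) + B) :
    Z K = A ^ K * Z 0 + (∑ k ∈ Finset.range K, A ^ k) * B ∧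
    g2α + g2w * ((∑ k ∈ Finset.range K, A ^ k) * B) =
      g2α - γ • (g2w * (∑ k ∈ Finset.range K, (1 - γ • H) ^ k) * C) := by
  refine ⟨A.eq_pow_mul_add_geom_sum_mul_of_affine_recurrence B Z (fun t ht => ?_) K le_rfl, ?_⟩
  · exact hrec (t + 1) t.succ_pos ht
  · simp only [hA, hB, Matrix.mul_neg, Matrix.mul_smul, Matrix.mul_assoc, sub_eq_add_neg]
end
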